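/- Let n ≥ 2, let Ω ⊂ ℂⁿ be an open set, and let K ⊂ Ω be a compact subset. Then ℂⁿ \ K is connected if and only if ω \ K is connected for every connected component ω of Ω. -/

import Mathlib

open Set Metric Complex Filter Real

private lemma tendsto_mem_pair {α β : Type*} [TopologicalSpace β] {l : Filter α}
    {f g h : α → β} {L : β} (hf : Filter.Tendsto f l (nhds L)) (hg : Filter.Tendsto g l (nhds L))
    (hmem : ∀ a, h a = f a ∨ h a = g a) : Filter.Tendsto h l (nhds L) := by
  rw [Filter.tendsto_def] at hf hg ⊢
  intro U hU
  filter_upwards [hf U hU, hg U hU] with a ha1 ha2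
  rcases hmem a with h' | h' <;> simp only [Set.mem_preimage, h'] <;> assumption

private lemma slit_of_close {w : ℂ} (h : ‖w - 1‖ < 1) : w ∈ Complex.slitPlane := by
  rw [Complex.mem_slitPlane_iff]
  left
  have h1 : |(w - 1).re| ≤ ‖w - 1‖ := Complex.abs_re_le_norm _
  have h2 : (w - 1).re = w.re - 1 := by simp
  rw [h2] at h1
  have h3 := abs_lt.mp (lt_of_le_of_lt h1 h)
  linarith [h3.1]

variable {E : Type*} [NormedAddCommGroup E] [NormedSpace ℝ E]

private lemma phragmen_brouwer {A B : Set E} (hA : IsClosed A) (hB : IsClosed B)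
    (hAB : Disjoint A B) {p q : E} (hp : p ∈ (A ∪ B)ᶜ) (hq : q ∈ (A ∪ B)ᶜ)
    (hU : JoinedIn Aᶜ p q) (hV : JoinedIn Bᶜ p q) : JoinedIn (A ∪ B)ᶜ p q := by
  classical
  rcases A.eq_empty_or_nonempty with rfl | hAne
  · simpa using hV
  rcases B.eq_empty_or_nonempty with rfl | hBne
  · simpa using hU
  set W : Set E := (A ∪ B)ᶜ with hW
  have hWopen : IsOpen W := (hA.union hB).isOpen_compl
  by_contra hcon
  set c : Set E := connectedComponentIn W q with hc
  have hqW : q ∈ W := hq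
  have hpW : p ∈ W := hp
  have hqc : q ∈ c := mem_connectedComponentIn hqW
  have hcW : c ⊆ W := connectedComponentIn_subset _ _
  have hcopen : IsOpen c := hWopen.connectedComponentIn
  have hkey : ∀ z ∈ closure c, z ∈ W → z ∈ c := by
    intro z hz hzW
    rcases mem_closure_iff.mp hz _ (hWopen.connectedComponentIn (x := z))
        (mem_connectedComponentIn hzW) with ⟨y, hy1, hy2⟩
    have := mem_connectedComponentIn hzW
    rwa [connectedComponentIn_eq hy1, ← connectedComponentIn_eq hy2] at this
  have hpc : p ∉ c := by
    intro hpc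
    have hconn : IsConnected c := isConnected_connectedComponentIn_iff.mpr hqW
    have hpath : IsPathConnected c := hcopen.isConnected_iff_isPathConnected.mp hconn
    exact hcon ((hpath.joinedIn p hpc q hqc).mono hcW)
  -- the Urysohn-type function
  set dA : E → ℝ := fun x => infDist x A with hdA
  set dB : E → ℝ := fun x => infDist x B with hdB
  have hdenom : ∀ x, 0 < dB x + dA x := by
    intro x
    rcases lt_or_eq_of_le (add_nonneg (infDist_nonneg (s := B) (x := x))
        (infDist_nonneg (s := A) (x := x))) with h | h
    · exact h
    · exfalso
      have h1 : dB x = 0 := by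
        have := infDist_nonneg (s := B) (x := x)
        have := infDist_nonneg (s := A) (x := x)
        simp only [hdB, hdA] at *
        linarith
      have h2 : dA x = 0 := by
        have := infDist_nonneg (s := B) (x := x)
        have := infDist_nonneg (s := A) (x := x)
        simp only [hdB, hdA] at *
        linarith
      have hxB : x ∈ B := (hB.mem_iff_infDist_zero hBne).mpr h1
      have hxA : x ∈ A := (hA.mem_iff_infDist_zero hAne).mpr h2
      exact hAB.ne_of_mem hxA hxB rfl
  set lam : E → ℝ := fun x => dB x / (dB x + dA x) with hlam
  have hlamc : Continuous lam :=
    (continuous_infDist_pt B).div ((continuous_infDist_pt B).add (continuous_infDist_pt A))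
      (fun x => (hdenom x).ne')
  have hlam0 : ∀ x, 0 ≤ lam x := fun x =>
    div_nonneg (infDist_nonneg) (hdenom x).le
  have hlam1 : ∀ x, lam x ≤ 1 := by
    intro x
    simp only [hlam]
    rw [div_le_one (hdenom x)]
    have := infDist_nonneg (s := A) (x := x)
    simp only [hdB, hdA]
    linarith
  have hlamA : ∀ x ∈ A, lam x = 1 := by
    intro x hx
    have h2 : dA x = 0 := infDist_zero_of_mem hx
    have h3 : dB x ≠ 0 := by
      intro h0
      exact hAB.ne_of_mem hx ((hB.mem_iff_infDist_zero hBne).mpr h0) rfl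
    simp only [hlam]
    rw [h2, add_zero, div_self h3]
  have hlamB : ∀ x ∈ B, lam x = 0 := by
    intro x hx
    have h2 : dB x = 0 := infDist_zero_of_mem hx
    simp only [hlam]
    rw [h2, zero_div]
  have hlam_lt1 : ∀ x ∉ A, lam x < 1 := by
    intro x hx
    have h2 : 0 < dA x := by
      rcases lt_or_eq_of_le (infDist_nonneg (s := A) (x := x)) with h | h
      · exact h
      · exact absurd ((hA.mem_iff_infDist_zero hAne).mpr h.symm) hx
    simp only [hlam]
    rw [div_lt_one (hdenom x)]
    linarith
  have hlam_pos : ∀ x ∉ B, 0 < lam x := by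
    intro x hx
    have h2 : 0 < dB x := by
      rcases lt_or_eq_of_le (infDist_nonneg (s := B) (x := x)) with h | h
      · exact h
      · exact absurd ((hB.mem_iff_infDist_zero hBne).mpr h.symm) hx
    exact div_pos h2 (hdenom x)
  -- circle-valued separation function
  set th : E → ℝ := fun x => if x ∈ c then -lam x else lam x with hth
  set gc : E → ℂ := fun x => Complex.exp ((π * th x : ℝ) * Complex.I) with hgc
  have hgne : ∀ x, gc x ≠ 0 := fun x => Complex.exp_ne_zero _
  have habs : ∀ x, ‖gc x‖ = 1 := fun x => Complex.norm_exp_ofReal_mul_I _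
  have hF1 : Continuous (fun x : E => Complex.exp ((π * lam x : ℝ) * Complex.I)) :=
    Complex.continuous_exp.comp
      ((Complex.continuous_ofReal.comp (continuous_const.mul hlamc)).mul continuous_const)
  have hF2 : Continuous (fun x : E => Complex.exp ((π * (-lam x) : ℝ) * Complex.I)) :=
    Complex.continuous_exp.comp
      ((Complex.continuous_ofReal.comp (continuous_const.mul hlamc.neg)).mul continuous_const)
  have hgcF : ∀ x, gc x = Complex.exp ((π * lam x : ℝ) * Complex.I) ∨
      gc x = Complex.exp ((π * (-lam x) : ℝ) * Complex.I) := by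
    intro x
    by_cases hxc : x ∈ c
    · right; simp only [hgc, hth, if_pos hxc]
    · left; simp only [hgc, hth, if_neg hxc]
  have hgccont : Continuous gc := by
    rw [continuous_iff_continuousAt]
    intro x
    by_cases hxc : x ∈ c
    · have hev : (fun y : E => Complex.exp ((π * (-lam y) : ℝ) * Complex.I)) =ᶠ[nhds x] gc := by
        filter_upwards [hcopen.mem_nhds hxc] with y hy
        simp only [hgc, hth, if_pos hy]
      exact hF2.continuousAt.congr hev
    by_cases hxcl : x ∈ closure c
    · -- boundary case
      have hxW : x ∉ W := fun hxW => hxc (hkey x hxcl hxW)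
      have hxAB : x ∈ A ∪ B := by
        by_contra hxAB
        exact hxW hxAB
      have heq : Complex.exp ((π * lam x : ℝ) * Complex.I)
          = Complex.exp ((π * (-lam x) : ℝ) * Complex.I) := by
        rcases hxAB with hxA | hxB
        · rw [hlamA x hxA]
          rw [show ((π * (1:ℝ) : ℝ) : ℂ) * Complex.I = π * Complex.I by push_cast; ring]
          rw [show ((π * (-(1:ℝ)) : ℝ) : ℂ) * Complex.I = -(π * Complex.I) by push_cast; ring]
          rw [Complex.exp_pi_mul_I, Complex.exp_neg, Complex.exp_pi_mul_I]
          norm_num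
        · rw [hlamB x hxB]
          norm_num
      have hval : gc x = Complex.exp ((π * lam x : ℝ) * Complex.I) := by
        simp only [hgc, hth, if_neg hxc]
      unfold ContinuousAt
      rw [hval]
      refine tendsto_mem_pair hF1.continuousAt ?_ hgcF
      rw [heq]
      exact hF2.continuousAt
    · have hev : (fun y : E => Complex.exp ((π * lam y : ℝ) * Complex.I)) =ᶠ[nhds x] gc := by
        filter_upwards [(isClosed_closure (s := c)).isOpen_compl.mem_nhds hxcl] with y hy
        simp only [hgc, hth, if_neg (fun hyc => hy (subset_closure hyc))]
      exact hF1.continuousAt.congr hev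
  -- paths and straight-line homotopy
  obtain ⟨ga, hga⟩ := hU
  obtain ⟨gb, hgb⟩ := hV
  have hgam : ∀ s : ℝ, ga.extend s ∈ Aᶜ := by
    intro s
    simp only [Path.extend, Set.IccExtend]
    exact hga _
  have hgbm : ∀ s : ℝ, gb.extend s ∈ Bᶜ := by
    intro s
    simp only [Path.extend, Set.IccExtend]
    exact hgb _
  set H : ℝ × ℝ → E := fun z => (1 - z.2) • ga.extend z.1 + z.2 • gb.extend z.1 with hH
  have hHcont : Continuous H := by
    apply Continuous.add
    · exact (continuous_const.sub continuous_snd).smul (ga.continuous_extend.comp continuous_fst)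
    · exact continuous_snd.smul (gb.continuous_extend.comp continuous_fst)
  set G : ℝ × ℝ → ℂ := fun z => gc (H z) with hG
  have hGcont : Continuous G := hgccont.comp hHcont
  have hGne : ∀ z, G z ≠ 0 := fun z => hgne _
  have hGabs : ∀ z, ‖G z‖ = 1 := fun z => habs _
  have hH0 : ∀ t : ℝ, H (0, t) = p := by
    intro t
    simp only [hH, Path.extend_zero]
    rw [← add_smul]
    norm_num
  have hH1 : ∀ t : ℝ, H (1, t) = q := by
    intro t
    simp only [hH, Path.extend_one]
    rw [← add_smul]
    norm_num
  have hHs0 : ∀ s : ℝ, H (s, 0) = ga.extend s := by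
    intro s
    simp [hH]
  have hHs1 : ∀ s : ℝ, H (s, 1) = gb.extend s := by
    intro s
    simp [hH]
  -- uniform continuity and subdivision
  have hUC := ((isCompact_Icc (a := (0:ℝ)) (b := 1)).prod
    (isCompact_Icc (a := (0:ℝ)) (b := 1))).uniformContinuousOn_of_continuous hGcont.continuousOn
  rw [Metric.uniformContinuousOn_iff] at hUC
  obtain ⟨ep, hep, hUC⟩ := hUC 1 one_pos
  obtain ⟨N0, hN0⟩ := exists_nat_one_div_lt hep
  set M : ℕ := N0 + 1 with hM
  have hM0 : (0:ℝ) < (M:ℝ) := by positivity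
  have hMd : (1:ℝ)/(M:ℝ) < ep := by
    rw [hM]
    push_cast
    exact hN0
  have hrow : ∀ j : ℕ, j < M → ∀ s ∈ Icc (0:ℝ) 1,
      ‖G (s, ((j:ℝ)+1)/(M:ℝ)) / G (s, (j:ℝ)/(M:ℝ)) - 1‖ < 1 := by
    intro j hj s hs
    have hj1 : ((j:ℝ)+1) ≤ (M:ℝ) := by exact_mod_cast Nat.succ_le_of_lt hj
    have hjn : (0:ℝ) ≤ (j:ℝ) := Nat.cast_nonneg j
    have h1 : (s, ((j:ℝ)+1)/(M:ℝ)) ∈ (Icc (0:ℝ) 1) ×ˢ (Icc (0:ℝ) 1) := by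
      refine ⟨hs, ⟨by positivity, ?_⟩⟩
      rw [div_le_one hM0]
      exact hj1
    have h2 : (s, (j:ℝ)/(M:ℝ)) ∈ (Icc (0:ℝ) 1) ×ˢ (Icc (0:ℝ) 1) := by
      refine ⟨hs, ⟨by positivity, ?_⟩⟩
      rw [div_le_one hM0]
      linarith
    have hdist : dist (s, ((j:ℝ)+1)/(M:ℝ)) (s, (j:ℝ)/(M:ℝ)) < ep := by
      rw [Prod.dist_eq]
      simp only [dist_self]
      rw [max_eq_right dist_nonneg, Real.dist_eq]
      have : ((j:ℝ)+1)/(M:ℝ) - (j:ℝ)/(M:ℝ) = 1/(M:ℝ) := by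
        field_simp
        ring
      rw [this]
      rwa [abs_of_pos (by positivity)]
    have hlt := hUC _ h1 _ h2 hdist
    rw [div_sub_one (hGne _), norm_div, hGabs, div_one]
    rwa [Complex.dist_eq] at hlt
  -- the lifts of the rows
  set Vf : ℕ → ℝ → ℂ := fun j s =>
    Complex.log (G (s, ((j:ℝ)+1)/(M:ℝ)) / G (s, (j:ℝ)/(M:ℝ))) with hVf
  set Lf : ℕ → ℝ → ℂ := fun j s =>
    ((π * th (ga.extend s) : ℝ) : ℂ) * Complex.I + ∑ i ∈ Finset.range j, Vf i s with hLf
  have hexpL : ∀ j, j ≤ M → ∀ s, Complex.exp (Lf j s) = G (s, (j:ℝ)/(M:ℝ)) := by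
    intro j
    induction j with
    | zero =>
      intro _ s
      simp only [hLf, Finset.range_zero, Finset.sum_empty, add_zero, Nat.cast_zero, zero_div]
      have h1 : G (s, (0:ℝ)) = gc (ga.extend s) := by simp only [hG]; rw [hHs0]
      rw [h1]
    | succ j ih =>
      intro hj s
      have hjM : j < M := lt_of_lt_of_le (Nat.lt_succ_self j) hj
      have hsum : Lf (j+1) s = Lf j s + Vf j s := by
        simp only [hLf, Finset.sum_range_succ]
        ring
      rw [hsum, Complex.exp_add, ih (le_of_lt hjM) s]
      simp only [hVf]
      rw [Complex.exp_log (div_ne_zero (hGne _) (hGne _))]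
      rw [mul_comm, div_mul_cancel₀ _ (hGne _)]
      push_cast
      ring_nf
  have hthp : th p = lam p := by simp only [hth, if_neg hpc]
  have hthq : th q = -lam q := by simp only [hth, if_pos hqc]
  have hGs0 : ∀ t : ℝ, G (0, t) = gc p := fun t => by simp only [hG]; rw [hH0]
  have hGs1 : ∀ t : ℝ, G (1, t) = gc q := fun t => by simp only [hG]; rw [hH1]
  have hVf0 : ∀ j, Vf j 0 = 0 := by
    intro j
    simp only [hVf, hGs0]
    rw [div_self (hgne p), Complex.log_one]
  have hVf1 : ∀ j, Vf j 1 = 0 := by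
    intro j
    simp only [hVf, hGs1]
    rw [div_self (hgne q), Complex.log_one]
  have hL0 : Lf M 0 = ((π * lam p : ℝ) : ℂ) * Complex.I := by
    simp only [hLf, hVf0, Finset.sum_const_zero, add_zero, Path.extend_zero, hthp]
  have hL1 : Lf M 1 = ((π * (-lam q) : ℝ) : ℂ) * Complex.I := by
    simp only [hLf, hVf1, Finset.sum_const_zero, add_zero, Path.extend_one, hthq]
  -- the other branch function
  set phV : E → ℝ := fun x => if x ∈ c then 2 - lam x else lam x with hphV
  have hexpphV : ∀ x, Complex.exp (((π * phV x : ℝ) : ℂ) * Complex.I) = gc x := by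
    intro x
    by_cases hxc : x ∈ c
    · simp only [hphV, hgc, hth, if_pos hxc]
      rw [show ((π * (2 - lam x) : ℝ) : ℂ) * Complex.I
          = 2 * (π:ℝ) * Complex.I + ((π * (-lam x) : ℝ) : ℂ) * Complex.I by push_cast; ring]
      rw [Complex.exp_add, Complex.exp_two_pi_mul_I, one_mul]
    · simp only [hphV, hgc, hth, if_neg hxc]
  have hphVq : phV q = 2 - lam q := by simp only [hphV, if_pos hqc]
  have hphVp : phV p = lam p := by simp only [hphV, if_neg hpc]
  -- continuity of the two branch functions at relevant points
  have hthcont : ∀ x ∉ A, ContinuousAt th x := by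
    intro x hxA
    by_cases hxc : x ∈ c
    · have hev : (fun y : E => -lam y) =ᶠ[nhds x] th := by
        filter_upwards [hcopen.mem_nhds hxc] with y hy
        simp only [hth, if_pos hy]
      exact hlamc.neg.continuousAt.congr hev
    by_cases hxcl : x ∈ closure c
    · have hxW : x ∉ W := fun hxW => hxc (hkey x hxcl hxW)
      have hxB : x ∈ B := by
        by_contra hxB
        exact hxW (fun hab => hab.elim hxA hxB)
      have hl0 : lam x = 0 := hlamB x hxB
      have hval : th x = lam x := by simp only [hth, if_neg hxc]
      unfold ContinuousAt
      rw [hval, hl0]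
      refine tendsto_mem_pair (f := lam) (g := fun y => -lam y) ?_ ?_ ?_
      · have h' : Filter.Tendsto lam (nhds x) (nhds (lam x)) := hlamc.continuousAt
        rwa [hl0] at h'
      · have h' : Filter.Tendsto (fun y => -lam y) (nhds x) (nhds (-lam x)) :=
          hlamc.neg.continuousAt
        rw [hl0] at h'
        simpa using h'
      · intro a
        by_cases hac : a ∈ c
        · right; simp only [hth, if_pos hac]
        · left; simp only [hth, if_neg hac]
    · have hev : lam =ᶠ[nhds x] th := by
        filter_upwards [(isClosed_closure (s := c)).isOpen_compl.mem_nhds hxcl] with y hy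
        simp only [hth, if_neg (fun hyc => hy (subset_closure hyc))]
      exact hlamc.continuousAt.congr hev
  have hphVcont : ∀ x ∉ B, ContinuousAt phV x := by
    intro x hxB
    by_cases hxc : x ∈ c
    · have hev : (fun y : E => 2 - lam y) =ᶠ[nhds x] phV := by
        filter_upwards [hcopen.mem_nhds hxc] with y hy
        simp only [hphV, if_pos hy]
      exact (continuous_const.sub hlamc).continuousAt.congr hev
    by_cases hxcl : x ∈ closure c
    · have hxW : x ∉ W := fun hxW => hxc (hkey x hxcl hxW)
      have hxA : x ∈ A := by
        by_contra hxA
        exact hxW (fun hab => hab.elim hxA hxB)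
      have hl1 : lam x = 1 := hlamA x hxA
      have hval : phV x = lam x := by simp only [hphV, if_neg hxc]
      unfold ContinuousAt
      rw [hval, hl1]
      refine tendsto_mem_pair (f := lam) (g := fun y => 2 - lam y) ?_ ?_ ?_
      · have h' : Filter.Tendsto lam (nhds x) (nhds (lam x)) := hlamc.continuousAt
        rwa [hl1] at h'
      · have h' : Filter.Tendsto (fun y => 2 - lam y) (nhds x) (nhds (2 - lam x)) :=
          (continuous_const.sub hlamc).continuousAt
        rw [hl1] at h'
        norm_num at h'
        exact h'
      · intro a
        by_cases hac : a ∈ c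
        · right; simp only [hphV, if_pos hac]
        · left; simp only [hphV, if_neg hac]
    · have hev : lam =ᶠ[nhds x] phV := by
        filter_upwards [(isClosed_closure (s := c)).isOpen_compl.mem_nhds hxcl] with y hy
        simp only [hphV, if_neg (fun hyc => hy (subset_closure hyc))]
      exact hlamc.continuousAt.congr hev
  -- the comparison function
  set Df : ℝ → ℂ := fun s => Lf M s - ((π * phV (gb.extend s) : ℝ) : ℂ) * Complex.I with hDf
  have hDcont : ContinuousOn Df (Icc (0:ℝ) 1) := by
    apply ContinuousOn.sub
    · apply ContinuousOn.add
      · apply Continuous.continuousOn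
        refine Continuous.mul ?_ continuous_const
        refine Complex.continuous_ofReal.comp (continuous_const.mul ?_)
        rw [continuous_iff_continuousAt]
        intro s
        exact (hthcont _ (hgam s)).comp ga.continuous_extend.continuousAt
      · apply continuousOn_finset_sum
        intro i hi
        intro s hs
        apply ContinuousAt.continuousWithinAt
        have hi' : i < M := Finset.mem_range.mp hi
        have hslit : G (s, ((i:ℝ)+1)/(M:ℝ)) / G (s, (i:ℝ)/(M:ℝ)) ∈ Complex.slitPlane :=
          slit_of_close (hrow i hi' s hs)
        have hr1 : ContinuousAt (fun s' : ℝ => G (s', ((i:ℝ)+1)/(M:ℝ))) s :=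
          (hGcont.comp (continuous_id.prodMk continuous_const)).continuousAt
        have hr2 : ContinuousAt (fun s' : ℝ => G (s', (i:ℝ)/(M:ℝ))) s :=
          (hGcont.comp (continuous_id.prodMk continuous_const)).continuousAt
        have hratio : ContinuousAt
            (fun s' : ℝ => G (s', ((i:ℝ)+1)/(M:ℝ)) / G (s', (i:ℝ)/(M:ℝ))) s :=
          hr1.div hr2 (hGne _)
        exact ContinuousAt.clog hratio hslit
    · apply Continuous.continuousOn
      refine Continuous.mul ?_ continuous_const
      refine Complex.continuous_ofReal.comp (continuous_const.mul ?_)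
      rw [continuous_iff_continuousAt]
      intro s
      exact (hphVcont _ (hgbm s)).comp gb.continuous_extend.continuousAt
  have hexpD : ∀ s ∈ Icc (0:ℝ) 1, Complex.exp (Df s) = 1 := by
    intro s hs
    simp only [hDf]
    rw [Complex.exp_sub, hexpL M le_rfl s]
    rw [div_self hM0.ne']
    have h1 : G (s, (1:ℝ)) = gc (gb.extend s) := by simp only [hG]; rw [hHs1]
    rw [h1, hexpphV, div_self (hgne _)]
  have hDval : ∀ s ∈ Icc (0:ℝ) 1, ∃ k : ℤ, Df s = (k:ℂ) * (2 * (π:ℝ) * Complex.I) :=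
    fun s hs => Complex.exp_eq_one_iff.mp (hexpD s hs)
  set r : ℝ → ℝ := fun s => (Df s).im with hr
  have hrcont : ContinuousOn r (Icc 0 1) := Complex.continuous_im.comp_continuousOn hDcont
  have hr0 : r 0 = 0 := by
    have h1 : Df 0 = 0 := by
      simp only [hDf, hL0, Path.extend_zero, hphVp]
      ring
    simp only [hr, h1, Complex.zero_im]
  have hr1 : r 1 = -(2*π) := by
    have h1 : Df 1 = ((-(2*π) : ℝ) : ℂ) * Complex.I := by
      simp only [hDf, hL1, Path.extend_one, hphVq]
      push_cast
      ring
    simp only [hr, h1]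
    simp
  have hmem : -π ∈ Icc (r 1) (r 0) := by
    rw [hr0, hr1]
    constructor
    · nlinarith [Real.pi_pos]
    · nlinarith [Real.pi_pos]
  obtain ⟨s₀, hs₀, hrs₀⟩ := intermediate_value_Icc' (zero_le_one) hrcont hmem
  obtain ⟨k, hk⟩ := hDval s₀ hs₀
  have him : r s₀ = 2 * π * (k:ℝ) := by
    simp only [hr, hk]
    simp
    ring
  rw [hrs₀] at him
  have hπ := Real.pi_pos
  have hcast : ((2*k + 1 : ℤ) : ℝ) = 0 := by
    push_cast
    have h2 : π * (2 * (k:ℝ) + 1) = 0 := by linarith [him]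
    have := mul_eq_zero.mp h2
    rcases this with h | h
    · exact absurd h hπ.ne'
    · linarith
  have : (2*k + 1 : ℤ) = 0 := by exact_mod_cast hcast
  omega

private lemma mem_of_mem_closure_connectedComponentIn {Ω : Set E} (hΩ : IsOpen Ω) {x z : E}
    (hz : z ∈ Ω) (hcl : z ∈ closure (connectedComponentIn Ω x)) :
    z ∈ connectedComponentIn Ω x := by
  rcases mem_closure_iff.mp hcl _ (hΩ.connectedComponentIn (x := z))
      (mem_connectedComponentIn hz) with ⟨y, hy1, hy2⟩
  have := mem_connectedComponentIn hz
  rwa [connectedComponentIn_eq hy1, ← connectedComponentIn_eq hy2] at this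

theorem connectedness_components_diff (n : ℕ) (hn : 2 ≤ n)
    (Ω K : Set (Fin n → ℂ)) (hΩ : IsOpen Ω) (hK : IsCompact K) (hKΩ : K ⊆ Ω) :
    IsConnected Kᶜ ↔
      ∀ x ∈ Ω, IsConnected (connectedComponentIn Ω x \ K) := by
  haveI : Nonempty (Fin n) := ⟨⟨0, by omega⟩⟩
  have hKcl : IsClosed K := hK.isClosed
  constructor
  · -- forward direction
    intro hKc x hx
    set ω := connectedComponentIn Ω x with hω
    have hωopen : IsOpen ω := hΩ.connectedComponentIn
    have hωconn : IsConnected ω := isConnected_connectedComponentIn_iff.mpr hx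
    have hne : (ω \ K).Nonempty := by
      rw [Set.diff_nonempty]
      intro h
      have hcl : IsClosed ω := by
        refine isClosed_of_closure_subset ?_
        intro z hz
        have hzK : z ∈ K := by
          have := closure_mono h hz
          rwa [hKcl.closure_eq] at this
        exact mem_of_mem_closure_connectedComponentIn hΩ (hKΩ hzK) hz
      have huniv : ω = univ :=
        IsClopen.eq_univ ⟨hcl, hωopen⟩ ⟨x, mem_connectedComponentIn hx⟩
      exact hK.ne_univ (eq_univ_of_univ_subset (huniv ▸ h))
    have hωK_open : IsOpen (ω \ K) := hωopen.sdiff hKcl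
    have hAclosed : IsClosed (K ∩ ω) := by
      refine isClosed_of_closure_subset ?_
      intro z hz
      have hzK : z ∈ K := by
        have := closure_mono (inter_subset_left (t := ω)) hz
        rwa [hKcl.closure_eq] at this
      have hzω : z ∈ ω :=
        mem_of_mem_closure_connectedComponentIn hΩ (hKΩ hzK)
          (closure_mono (inter_subset_right (s := K)) hz)
      exact ⟨hzK, hzω⟩
    have hBclosed : IsClosed ωᶜ := hωopen.isClosed_compl
    have hdisj : Disjoint (K ∩ ω) ωᶜ := by
      rw [Set.disjoint_left]
      intro a ha hac
      exact hac ha.2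
    have hcompl : ((K ∩ ω) ∪ ωᶜ)ᶜ = ω \ K := by
      ext y
      simp only [Set.mem_compl_iff, Set.mem_union, Set.mem_inter_iff, Set.mem_diff]
      tauto
    rw [hωK_open.isConnected_iff_isPathConnected]
    obtain ⟨p, hp⟩ := hne
    refine ⟨p, hp, ?_⟩
    intro y hy
    have hKcpc : IsPathConnected Kᶜ := hKcl.isOpen_compl.isConnected_iff_isPathConnected.mp hKc
    have hωpc : IsPathConnected ω := hωopen.isConnected_iff_isPathConnected.mp hωconn
    have hUj : JoinedIn (K ∩ ω)ᶜ p y :=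
      (hKcpc.joinedIn p hp.2 y hy.2).mono (compl_subset_compl.mpr (inter_subset_left (t := ω)))
    have hVj : JoinedIn (ωᶜ)ᶜ p y := by
      rw [compl_compl]
      exact hωpc.joinedIn p hp.1 y hy.1
    have hpb := phragmen_brouwer hAclosed hBclosed hdisj
      (by rw [hcompl]; exact hp) (by rw [hcompl]; exact hy) hUj hVj
    rwa [hcompl] at hpb
  · -- reverse direction
    intro h
    have hKc_open : IsOpen Kᶜ := hKcl.isOpen_compl
    have hne : Kᶜ.Nonempty := by
      by_contra hne
      rw [Set.not_nonempty_iff_eq_empty, Set.compl_empty_iff] at hne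
      exact hK.ne_univ hne
    obtain ⟨p, hp⟩ := hne
    set C : Set (Fin n → ℂ) := connectedComponentIn Kᶜ p with hC
    set G : Set (Fin n → ℂ) :=
      (Kᶜ \ C) ∪ {y | y ∈ Ω ∧ (connectedComponentIn Ω y \ K) ∩ C = ∅} with hG
    have hGopen : IsOpen G := by
      rw [isOpen_iff_mem_nhds]
      intro y hy
      rcases hy with hy | hy
      · refine Filter.mem_of_superset
          ((hKc_open.connectedComponentIn).mem_nhds (mem_connectedComponentIn hy.1)) ?_
        intro u hu
        left
        refine ⟨connectedComponentIn_subset _ _ hu, ?_⟩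
        intro huC
        apply hy.2
        have h1 := connectedComponentIn_eq hu
        have h2 := connectedComponentIn_eq huC
        have : y ∈ connectedComponentIn Kᶜ y := mem_connectedComponentIn hy.1
        rwa [h1, ← h2] at this
      · refine Filter.mem_of_superset
          ((hΩ.connectedComponentIn).mem_nhds (mem_connectedComponentIn hy.1)) ?_
        intro u hu
        right
        have heq := connectedComponentIn_eq hu
        exact ⟨connectedComponentIn_subset _ _ hu, by rw [← heq]; exact hy.2⟩
    have hGC : ∀ y, y ∈ G → y ∈ C → False := by
      rintro y (hyG | hyG) hyC
      · exact hyG.2 hyC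
      · have hyK : y ∈ Kᶜ := connectedComponentIn_subset _ _ hyC
        have : y ∈ (connectedComponentIn Ω y \ K) ∩ C :=
          ⟨⟨mem_connectedComponentIn hyG.1, hyK⟩, hyC⟩
        rw [hyG.2] at this
        exact this
    have hGclosed : IsClosed G := by
      refine isClosed_of_closure_subset ?_
      intro z hz
      by_cases hzK : z ∈ K
      · right
        have hzΩ := hKΩ hzK
        refine ⟨hzΩ, ?_⟩
        by_contra hzne
        obtain ⟨w, hw⟩ := Set.nonempty_iff_ne_empty.mpr hzne
        rcases mem_closure_iff.mp hz _ (hΩ.connectedComponentIn (x := z))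
            (mem_connectedComponentIn hzΩ) with ⟨g, hg1, hg2⟩
        rcases hg2 with hg2 | hg2
        · have hs := h z hzΩ
          have hsub : connectedComponentIn Ω z \ K ⊆ C := by
            have h1 : connectedComponentIn Ω z \ K ⊆ connectedComponentIn Kᶜ w :=
              hs.isPreconnected.subset_connectedComponentIn hw.1 (fun u hu => hu.2)
            rwa [← connectedComponentIn_eq hw.2] at h1
          exact hg2.2 (hsub ⟨hg1, hg2.1⟩)
        · have heq := connectedComponentIn_eq hg1
          have h2 := hg2.2
          rw [← heq] at h2
          rw [h2] at hw
          exact hw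
      · by_cases hzC : z ∈ C
        · exfalso
          rcases mem_closure_iff.mp hz _ (hKc_open.connectedComponentIn (x := p)) hzC
            with ⟨g, hg1, hg2⟩
          exact hGC g hg2 hg1
        · left
          exact ⟨hzK, hzC⟩
    rcases isClopen_iff.mp ⟨hGclosed, hGopen⟩ with hGe | hGu
    · have hsub : Kᶜ ⊆ C := by
        intro y hy
        by_contra hyC
        have : y ∈ G := Or.inl ⟨hy, hyC⟩
        rw [hGe] at this
        exact this
      have hCeq : C = Kᶜ := Subset.antisymm (connectedComponentIn_subset _ _) hsub
      rw [← hCeq]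
      exact isConnected_connectedComponentIn_iff.mpr hp
    · exfalso
      have hpG : p ∈ G := hGu ▸ mem_univ p
      exact hGC p hpG (mem_connectedComponentIn hp)
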